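/- arXiv:1608.06407 — 2 statements merged into one kernel-verified Lean document; each statement's English description precedes it below -/
import Mathlib

section
/- Let G be an abelian group, g an element of order n = d+2 ≥ 3, and consider the zero-sum monoid B({g,−g}) with atoms v₁ = gⁿ, v₂ = (−g)ⁿ, v₃ = (−g)g. Then every element a ∈ B({g,−g}) can be written uniquely as v₁^{k₁} v₂^{k₂} v₃^{k₃} with k₁, k₂ ∈ ℕ₀ and 0 ≤ k₃, subject to the relation v₁v₂ = v₃ⁿ, and the set of lengths of v₁^{s} v₂^{s} is {2s, 2s + d, 2s + 2d, …, 2s + sd} = {2s + jd : 0 ≤ j ≤ s}. -/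
/-- Set of lengths of factorizations of `a` into irreducible elements (atoms). -/
def LengthsOf {M : Type*} [CommMonoid M] (a : M) : Set ℕ :=
  {n | ∃ s : Multiset M, Multiset.card s = n ∧ (∀ x ∈ s, Irreducible x) ∧ s.prod = a}

/-- The set of distances (delta set) of a monoid. -/
def DeltaSet (M : Type*) [CommMonoid M] : Set ℕ :=
  {d | 0 < d ∧ ∃ (a : M) (k : ℕ), k ∈ LengthsOf a ∧ k + d ∈ LengthsOf a ∧
      ∀ ℓ ∈ LengthsOf a, ¬(k < ℓ ∧ ℓ < k + d)}

/-- A monoid is atomic if every nonunit is a finite product of irreducible elements. -/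
def IsAtomicMonoid (M : Type*) [CommMonoid M] : Prop :=
  ∀ a : M, ¬ IsUnit a → ∃ s : Multiset M, (∀ x ∈ s, Irreducible x) ∧ s.prod = a

universe u

/-- A monoid is Krull if it admits a divisor homomorphism into a free abelian monoid. -/
def IsKrullMonoid (M : Type u) [CommMonoid M] : Prop :=
  ∃ (P : Type u) (φ : M →* Multiplicative (P →₀ ℕ)), ∀ a b : M, a ∣ b ↔ φ a ∣ φ b

/-- The monoid of zero-sum sequences over `G₀ ⊆ G`, as a submonoid of the
free abelian monoid (written multiplicatively) of multisets over `G`. -/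
def ZeroSumMonoid {G : Type*} [AddCommGroup G] (G₀ : Set G) :
    Submonoid (Multiplicative (Multiset G)) where
  carrier := {S | (∀ x ∈ Multiplicative.toAdd S, x ∈ G₀) ∧ (Multiplicative.toAdd S).sum = 0}
  one_mem' := by simp
  mul_mem' := by
    intro a b ha hb
    refine ⟨?_, ?_⟩
    · intro x hx
      rw [toAdd_mul, Multiset.mem_add] at hx
      exact hx.elim (ha.1 x) (hb.1 x)
    · rw [toAdd_mul, Multiset.sum_add, ha.2, hb.2, add_zero]


section ZSMAux

open Multiset Multiplicative

variable {G : Type*} [AddCommGroup G] [DecidableEq G] {g : G} {d : ℕ}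

private lemma zsm_ne (hd : 0 < d) (hg : addOrderOf g = d + 2) : g ≠ -g := by
  intro h
  have h2 : (2 : ℕ) • g = 0 := by
    rw [two_nsmul]; nth_rewrite 2 [h]; simp
  have h3 := addOrderOf_dvd_of_nsmul_eq_zero h2
  rw [hg] at h3
  have := Nat.le_of_dvd (by norm_num) h3
  omega

private lemma zsm_sum_iff (hg : addOrderOf g = d + 2) (p q : ℕ) :
    (replicate p g + replicate q (-g)).sum = 0 ↔ p ≡ q [MOD d + 2] := by
  rw [Multiset.sum_add, Multiset.sum_replicate, Multiset.sum_replicate]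
  have h : p • g + q • (-g) = ((p : ℤ) - (q : ℤ)) • g := by
    rw [sub_smul, natCast_zsmul, natCast_zsmul, smul_neg, sub_eq_add_neg]
  rw [h, ← addOrderOf_dvd_iff_zsmul_eq_zero, hg, Nat.modEq_iff_dvd]
  exact ⟨fun h' => dvd_sub_comm.mp h', fun h' => dvd_sub_comm.mp h'⟩

private lemma zsm_mem (hg : addOrderOf g = d + 2) {p q : ℕ} (h : p ≡ q [MOD d + 2]) :
    ofAdd (replicate p g + replicate q (-g)) ∈ ZeroSumMonoid ({g, -g} : Set G) := by
  constructor
  · intro x hx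
    rw [toAdd_ofAdd, Multiset.mem_add] at hx
    rcases hx with hx | hx <;> rw [eq_of_mem_replicate hx] <;> simp
  · rw [toAdd_ofAdd]; exact (zsm_sum_iff hg p q).2 h

private lemma zsm_count (hne : g ≠ -g) (p q : ℕ) :
    (replicate p g + replicate q (-g)).count g = p ∧
      (replicate p g + replicate q (-g)).count (-g) = q := by
  have c1 : (replicate q (-g)).count g = 0 := by
    rw [count_replicate, if_neg (fun h => hne h.symm)]
  have c2 : (replicate p g).count (-g) = 0 := by
    rw [count_replicate, if_neg (fun h => hne h)]
  constructor <;> rw [count_add]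
  · rw [c1, count_replicate_self, add_zero]
  · rw [c2, count_replicate_self, zero_add]

private lemma zsm_rep_inj (hne : g ≠ -g) {p q p' q' : ℕ}
    (h : (ofAdd (replicate p g + replicate q (-g)) : Multiplicative (Multiset G)) =
      ofAdd (replicate p' g + replicate q' (-g))) : p = p' ∧ q = q' := by
  have h' := ofAdd.injective h
  constructor
  · rw [← (zsm_count hne p q).1, ← (zsm_count (g := g) hne p' q').1, h']
  · rw [← (zsm_count hne p q).2, ← (zsm_count (g := g) hne p' q').2, h']

private lemma zsm_rep_of (hne : g ≠ -g) {S : Multiset G}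
    (h1 : ∀ x ∈ S, x ∈ ({g, -g} : Set G)) :
    S = replicate (S.count g) g + replicate (S.count (-g)) (-g) := by
  ext e
  rw [count_add, count_replicate, count_replicate]
  by_cases he : g = e
  · subst he
    rw [if_pos rfl, if_neg (fun h => hne h.symm), add_zero]
  · by_cases he2 : -g = e
    · subst he2
      rw [if_neg he, if_pos rfl, zero_add]
    · rw [if_neg he, if_neg he2, add_zero]
      refine count_eq_zero.2 fun hm => ?_
      rcases h1 e hm with h | h
      · exact he h.symm
      · exact he2 h.symm

private lemma zsm_exists_rep (hne : g ≠ -g) (hg : addOrderOf g = d + 2)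
    {a : Multiplicative (Multiset G)} (ha : a ∈ ZeroSumMonoid ({g, -g} : Set G)) :
    ∃ p q : ℕ, p ≡ q [MOD d + 2] ∧ a = ofAdd (replicate p g + replicate q (-g)) := by
  obtain ⟨h1, h2⟩ := ha
  have hrep := zsm_rep_of hne h1
  refine ⟨(toAdd a).count g, (toAdd a).count (-g), ?_, ?_⟩
  · rw [← zsm_sum_iff (g := g) hg, ← hrep]; exact h2
  · rw [← hrep]; rfl

private lemma zsm_pair : ({g, -g} : Multiset G) = replicate 1 g + replicate 1 (-g) := rfl

/-- The canonical product in additive normal form. -/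
private lemma zsm_v_eq (k1 k2 k3 : ℕ) :
    (ofAdd (replicate (d + 2) g)) ^ k1 * (ofAdd (replicate (d + 2) (-g))) ^ k2 *
        (ofAdd ({g, -g} : Multiset G)) ^ k3 =
      ofAdd (replicate (k1 * (d + 2) + k3) g + replicate (k2 * (d + 2) + k3) (-g)) := by
  apply toAdd.injective
  rw [toAdd_mul, toAdd_mul, toAdd_pow, toAdd_pow, toAdd_pow, toAdd_ofAdd, toAdd_ofAdd,
    toAdd_ofAdd, toAdd_ofAdd, zsm_pair, smul_add, nsmul_replicate, nsmul_replicate,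
    nsmul_replicate, nsmul_replicate, mul_one, replicate_add, replicate_add,
    add_add_add_comm]

private lemma zsm_one_iff {p q : ℕ} :
    (ofAdd (replicate p g + replicate q (-g)) : Multiplicative (Multiset G)) = 1 ↔
      p = 0 ∧ q = 0 := by
  constructor
  · intro h
    have h' := congrArg (Multiset.card ∘ toAdd) h
    simp only [Function.comp_apply, toAdd_ofAdd, toAdd_one, card_add, card_replicate,
      Multiset.card_zero] at h'
    omega
  · rintro ⟨rfl, rfl⟩; simp

private lemma zsm_isUnit_iff (x : ↥(ZeroSumMonoid ({g, -g} : Set G))) :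
    IsUnit x ↔ (x : Multiplicative (Multiset G)) = 1 := by
  constructor
  · intro hx
    obtain ⟨y, hy1, _⟩ := isUnit_iff_exists.mp hx
    have h : (x : Multiplicative (Multiset G)) * (y : Multiplicative (Multiset G)) = 1 := by
      rw [← Submonoid.coe_mul, hy1]; rfl
    have h2 := congrArg toAdd h
    rw [toAdd_mul, toAdd_one] at h2
    have h3 := congrArg Multiset.card h2
    rw [Multiset.card_add, Multiset.card_zero] at h3
    have h0 : toAdd (x : Multiplicative (Multiset G)) = 0 :=
      Multiset.card_eq_zero.mp (by omega)
    calc (x : Multiplicative (Multiset G)) = ofAdd (toAdd (x : Multiplicative (Multiset G))) := rfl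
      _ = ofAdd 0 := by rw [h0]
      _ = 1 := rfl
  · intro h
    have : x = 1 := Subtype.ext h
    rw [this]; exact isUnit_one

private lemma zsm_small_eq (hd : 0 < d) {u v : ℕ} (hu : u < d + 2) (hv : v < d + 2)
    (h : u ≡ v [MOD d + 2]) : u = v := by
  rwa [Nat.ModEq, Nat.mod_eq_of_lt hu, Nat.mod_eq_of_lt hv] at h

private lemma zsm_irreducible_iff (hd : 0 < d) (hg : addOrderOf g = d + 2)
    (x : ↥(ZeroSumMonoid ({g, -g} : Set G))) :
    Irreducible x ↔
      ((x : Multiplicative (Multiset G)) = ofAdd (replicate (d + 2) g) ∨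
       (x : Multiplicative (Multiset G)) = ofAdd (replicate (d + 2) (-g)) ∨
       (x : Multiplicative (Multiset G)) = ofAdd ({g, -g} : Multiset G)) := by
  have hne := zsm_ne hd hg
  have e1 : (ofAdd (replicate (d + 2) g) : Multiplicative (Multiset G)) =
      ofAdd (replicate (d + 2) g + replicate 0 (-g)) := by
    rw [replicate_zero, add_zero]
  have e2 : (ofAdd (replicate (d + 2) (-g)) : Multiplicative (Multiset G)) =
      ofAdd (replicate 0 g + replicate (d + 2) (-g)) := by
    rw [replicate_zero, zero_add]
  have e3 : (ofAdd ({g, -g} : Multiset G) : Multiplicative (Multiset G)) =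
      ofAdd (replicate 1 g + replicate 1 (-g)) := rfl
  constructor
  · intro hx
    obtain ⟨p, q, hmod, hrep⟩ := zsm_exists_rep hne hg x.2
    have hx1 : ¬(p = 0 ∧ q = 0) := by
      rintro ⟨rfl, rfl⟩
      exact hx.not_isUnit ((zsm_isUnit_iff x).2 (by rw [hrep]; exact zsm_one_iff.2 ⟨rfl, rfl⟩))
    have split : ∀ p1 q1 p2 q2 : ℕ, p1 ≡ q1 [MOD d + 2] → p2 ≡ q2 [MOD d + 2] →
        p = p1 + p2 → q = q1 + q2 → ¬(p1 = 0 ∧ q1 = 0) → ¬(p2 = 0 ∧ q2 = 0) → False := by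
      intro p1 q1 p2 q2 hm1 hm2 hp hq h1 h2
      have hmul : x = (⟨_, zsm_mem hg hm1⟩ : ↥(ZeroSumMonoid ({g, -g} : Set G))) *
          ⟨_, zsm_mem hg hm2⟩ := by
        apply Subtype.ext
        rw [Submonoid.coe_mul]
        show (x : Multiplicative (Multiset G)) =
          ofAdd (replicate p1 g + replicate q1 (-g)) * ofAdd (replicate p2 g + replicate q2 (-g))
        rw [hrep, ← ofAdd_add, hp, hq, replicate_add, replicate_add, add_add_add_comm]
      rcases hx.isUnit_or_isUnit hmul with h | h
      · exact h1 (zsm_one_iff.1 ((zsm_isUnit_iff _).1 h))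
      · exact h2 (zsm_one_iff.1 ((zsm_isUnit_iff _).1 h))
    by_cases hp0 : p = 0
    · subst hp0
      obtain ⟨c, rfl⟩ : (d + 2) ∣ q := Nat.modEq_zero_iff_dvd.1 hmod.symm
      have hc : c ≠ 0 := by rintro rfl; exact hx1 ⟨rfl, by ring⟩
      obtain ⟨c', rfl⟩ : ∃ c', c = 1 + c' := ⟨c - 1, by omega⟩
      rcases Nat.eq_zero_or_pos c' with hc2 | hc2
      · subst hc2
        right; left
        rw [hrep, e2, Nat.mul_one]
      · exfalso
        refine split 0 (d + 2) 0 ((d + 2) * c') ?_ ?_ rfl (by ring) (by omega) ?_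
        · exact (Nat.modEq_zero_iff_dvd.2 dvd_rfl).symm
        · exact (Nat.modEq_zero_iff_dvd.2 (Dvd.intro _ rfl)).symm
        · rintro ⟨-, h⟩
          have := Nat.mul_pos (show 0 < d + 2 by omega) hc2
          omega
    · by_cases hq0 : q = 0
      · subst hq0
        obtain ⟨c, rfl⟩ : (d + 2) ∣ p := Nat.modEq_zero_iff_dvd.1 hmod
        have hc : c ≠ 0 := by rintro rfl; exact hp0 (by ring)
        obtain ⟨c', rfl⟩ : ∃ c', c = 1 + c' := ⟨c - 1, by omega⟩
        rcases Nat.eq_zero_or_pos c' with hc2 | hc2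
        · subst hc2
          left
          rw [hrep, e1, Nat.mul_one]
        · exfalso
          refine split (d + 2) 0 ((d + 2) * c') 0 ?_ ?_ (by ring) rfl (by omega) ?_
          · exact Nat.modEq_zero_iff_dvd.2 dvd_rfl
          · exact Nat.modEq_zero_iff_dvd.2 (Dvd.intro _ rfl)
          · rintro ⟨h, -⟩
            have := Nat.mul_pos (show 0 < d + 2 by omega) hc2
            omega
      · by_cases h11 : p = 1 ∧ q = 1
        · right; right
          rw [hrep, e3, h11.1, h11.2]
        · exfalso
          have hm2 : p - 1 ≡ q - 1 [MOD d + 2] := by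
            refine Nat.ModEq.add_right_cancel' 1 ?_
            rwa [Nat.sub_add_cancel (by omega), Nat.sub_add_cancel (by omega)]
          exact split 1 1 (p - 1) (q - 1) rfl hm2 (by omega) (by omega)
            (by omega) (by omega)
  · intro hx
    constructor
    · rw [zsm_isUnit_iff]
      rcases hx with h | h | h <;> rw [h] <;> intro h1
      · rw [e1] at h1; have := zsm_one_iff.1 h1; omega
      · rw [e2] at h1; have := zsm_one_iff.1 h1; omega
      · rw [e3] at h1; have := zsm_one_iff.1 h1; omega
    · rintro a b hab
      obtain ⟨pa, qa, hma, hra⟩ := zsm_exists_rep hne hg a.2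
      obtain ⟨pb, qb, hmb, hrb⟩ := zsm_exists_rep hne hg b.2
      have hsum : (x : Multiplicative (Multiset G)) =
          ofAdd (replicate (pa + pb) g + replicate (qa + qb) (-g)) := by
        have : (x : Multiplicative (Multiset G)) =
            (a : Multiplicative (Multiset G)) * (b : Multiplicative (Multiset G)) := by
          rw [hab]; rfl
        rw [this, hra, hrb, ← ofAdd_add, replicate_add, replicate_add, add_add_add_comm]
      have ua : pa = 0 → qa = 0 → IsUnit a := by
        rintro rfl rfl
        exact (zsm_isUnit_iff a).2 (by rw [hra]; exact zsm_one_iff.2 ⟨rfl, rfl⟩)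
      have ub : pb = 0 → qb = 0 → IsUnit b := by
        rintro rfl rfl
        exact (zsm_isUnit_iff b).2 (by rw [hrb]; exact zsm_one_iff.2 ⟨rfl, rfl⟩)
      rcases hx with h | h | h
      · rw [h, e1] at hsum
        obtain ⟨h1, h2⟩ := zsm_rep_inj hne hsum.symm
        have hqa : qa = 0 := by omega
        have hqb : qb = 0 := by omega
        have hda : (d + 2) ∣ pa := Nat.modEq_zero_iff_dvd.1 (hqa ▸ hma)
        rcases Nat.eq_zero_or_pos pa with h0 | h0
        · exact Or.inl (ua h0 hqa)
        · have := Nat.le_of_dvd h0 hda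
          exact Or.inr (ub (by omega) hqb)
      · rw [h, e2] at hsum
        obtain ⟨h1, h2⟩ := zsm_rep_inj hne hsum.symm
        have hpa : pa = 0 := by omega
        have hpb : pb = 0 := by omega
        have hda : (d + 2) ∣ qa := Nat.modEq_zero_iff_dvd.1 (hpa ▸ hma).symm
        rcases Nat.eq_zero_or_pos qa with h0 | h0
        · exact Or.inl (ua hpa h0)
        · have := Nat.le_of_dvd h0 hda
          exact Or.inr (ub hpb (by omega))
      · rw [h, e3] at hsum
        obtain ⟨h1, h2⟩ := zsm_rep_inj hne hsum.symm
        have hpq : pa = qa := zsm_small_eq hd (by omega) (by omega) hma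
        rcases Nat.eq_zero_or_pos pa with h0 | h0
        · exact Or.inl (ua h0 (by omega))
        · exact Or.inr (ub (by omega) (by omega))
private lemma zsm_lengths (hd : 0 < d) (hg : addOrderOf g = d + 2)
    (s : ℕ) (b : ↥(ZeroSumMonoid ({g, -g} : Set G)))
    (hb : (b : Multiplicative (Multiset G)) =
      (ofAdd (replicate (d + 2) g)) ^ s * (ofAdd (replicate (d + 2) (-g))) ^ s) :
    LengthsOf b = {ℓ : ℕ | ∃ j ≤ s, ℓ = 2 * s + j * d} := by
  have hne := zsm_ne hd hg
  have hb' : (b : Multiplicative (Multiset G)) =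
      ofAdd (replicate (s * (d + 2)) g + replicate (s * (d + 2)) (-g)) := by
    have h := zsm_v_eq (g := g) (d := d) s s 0
    rw [pow_zero, mul_one] at h
    rw [hb, h, Nat.add_zero]
  set A1 : ↥(ZeroSumMonoid ({g, -g} : Set G)) :=
    ⟨ofAdd (replicate (d + 2) g), by
      have h := zsm_mem (g := g) hg (Nat.modEq_zero_iff_dvd.2 (dvd_refl (d + 2))).symm.symm
      rwa [replicate_zero, add_zero] at h⟩ with hA1
  set A2 : ↥(ZeroSumMonoid ({g, -g} : Set G)) :=
    ⟨ofAdd (replicate (d + 2) (-g)), by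
      have h := zsm_mem (g := g) hg (Nat.modEq_zero_iff_dvd.2 (dvd_refl (d + 2))).symm
      rwa [replicate_zero, zero_add] at h⟩ with hA2
  set A3 : ↥(ZeroSumMonoid ({g, -g} : Set G)) :=
    ⟨ofAdd ({g, -g} : Multiset G), zsm_mem (g := g) hg (Nat.ModEq.refl 1)⟩ with hA3
  have cA1 : (A1 : Multiplicative (Multiset G)) =
      ofAdd (replicate (d + 2) g + replicate 0 (-g)) := by
    rw [hA1]; simp
  have cA2 : (A2 : Multiplicative (Multiset G)) =
      ofAdd (replicate 0 g + replicate (d + 2) (-g)) := by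
    rw [hA2]; simp
  have cA3 : (A3 : Multiplicative (Multiset G)) =
      ofAdd (replicate 1 g + replicate 1 (-g)) := rfl
  have hA12 : A1 ≠ A2 := fun h => by
    have h' := congrArg Subtype.val h
    rw [cA1, cA2] at h'
    have := (zsm_rep_inj hne h').1; omega
  have hA13 : A1 ≠ A3 := fun h => by
    have h' := congrArg Subtype.val h
    rw [cA1, cA3] at h'
    have := (zsm_rep_inj hne h').2; omega
  have hA23 : A2 ≠ A3 := fun h => by
    have h' := congrArg Subtype.val h
    rw [cA2, cA3] at h'
    have := (zsm_rep_inj hne h').1; omega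
  -- coercion of powers
  have coe_pows : ∀ k1 k2 k3 : ℕ, ((A1 ^ k1 * A2 ^ k2 * A3 ^ k3 :
      ↥(ZeroSumMonoid ({g, -g} : Set G))) : Multiplicative (Multiset G)) =
      ofAdd (replicate (k1 * (d + 2) + k3) g + replicate (k2 * (d + 2) + k3) (-g)) := by
    intro k1 k2 k3
    rw [Submonoid.coe_mul, Submonoid.coe_mul, SubmonoidClass.coe_pow, SubmonoidClass.coe_pow,
      SubmonoidClass.coe_pow]
    exact zsm_v_eq k1 k2 k3
  ext ℓ
  simp only [Set.mem_setOf_eq]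
  constructor
  · rintro ⟨t, hcard, hirrs, hprod⟩
    set k1 := t.count A1 with hk1
    set k2 := t.count A2 with hk2
    set k3 := t.count A3 with hk3d
    have ht : t = replicate k1 A1 + replicate k2 A2 + replicate k3 A3 := by
      rw [hk1, hk2, hk3d]
      ext e
      rw [count_add, count_add, count_replicate, count_replicate, count_replicate]
      by_cases h1 : A1 = e
      · subst h1
        rw [if_pos rfl, if_neg (fun h => hA12 h.symm), if_neg (fun h => hA13 h.symm)]
        omega
      · by_cases h2 : A2 = e
        · subst h2
          rw [if_neg h1, if_pos rfl, if_neg (fun h => hA23 h.symm)]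
          omega
        · by_cases h3 : A3 = e
          · subst h3
            rw [if_neg h1, if_neg h2, if_pos rfl]
            omega
          · rw [if_neg h1, if_neg h2, if_neg h3]
            refine count_eq_zero.2 fun hm => ?_
            rcases (zsm_irreducible_iff hd hg e).1 (hirrs e hm) with h | h | h
            · exact h1 (Subtype.ext h).symm
            · exact h2 (Subtype.ext h).symm
            · exact h3 (Subtype.ext h).symm
    have hprod' : b = A1 ^ k1 * A2 ^ k2 * A3 ^ k3 := by
      rw [← hprod, ht]
      rw [Multiset.prod_add, Multiset.prod_add, prod_replicate, prod_replicate, prod_replicate]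
    have hco := congrArg Subtype.val hprod'
    rw [coe_pows] at hco
    rw [hb'] at hco
    obtain ⟨he1, he2⟩ := zsm_rep_inj hne hco
    have hcard' : k1 + k2 + k3 = ℓ := by
      rw [← hcard, ht]
      simp [Multiset.card_add, Multiset.card_replicate]
    have hk1s : k1 ≤ s :=
      Nat.le_of_mul_le_mul_right (show k1 * (d + 2) ≤ s * (d + 2) by linarith) (by omega)
    have hk12 : k1 = k2 :=
      Nat.eq_of_mul_eq_mul_right (show 0 < d + 2 by omega)
        (show k1 * (d + 2) = k2 * (d + 2) by linarith)
    obtain ⟨j, rfl⟩ : ∃ j, s = k1 + j := ⟨s - k1, by omega⟩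
    have hk3 : k3 = j * (d + 2) := by
      have h' : (k1 + j) * (d + 2) = k1 * (d + 2) + j * (d + 2) := by ring
      linarith
    refine ⟨j, by omega, ?_⟩
    have hexp : j * (d + 2) = j * d + 2 * j := by ring
    linarith
  · rintro ⟨j, hj, rfl⟩
    obtain ⟨i, rfl⟩ : ∃ i, s = j + i := ⟨s - j, by omega⟩
    refine ⟨replicate i A1 + replicate i A2 + replicate (j * (d + 2)) A3, ?_, ?_, ?_⟩
    · simp only [Multiset.card_add, Multiset.card_replicate]
      have : j * (d + 2) = j * d + 2 * j := by ring
      linarith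
    · intro x hx
      rw [Multiset.mem_add, Multiset.mem_add] at hx
      refine (zsm_irreducible_iff hd hg x).2 ?_
      rcases hx with (hx | hx) | hx
      · left; rw [eq_of_mem_replicate hx]
      · right; left; rw [eq_of_mem_replicate hx]
      · right; right; rw [eq_of_mem_replicate hx]
    · rw [Multiset.prod_add, Multiset.prod_add, prod_replicate, prod_replicate, prod_replicate]
      apply Subtype.ext
      rw [coe_pows, hb']
      congr 2 <;> ring_nf
end ZSMAux

/-- With `g` of order `n = d+2 ≥ 3` and atoms `v₁ = gⁿ`, `v₂ = (-g)ⁿ`, `v₃ = g·(-g)` of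
`B({g,-g})`: every element has a unique representation `v₁^{k₁} v₂^{k₂} v₃^{k₃}` once the
relation `v₁v₂ = v₃ⁿ` is accounted for (normal form `k₃ < n`), and
`L(v₁^s v₂^s) = {2s + jd : 0 ≤ j ≤ s}`. -/
theorem structure_of_zeroSumMonoid_pair {G : Type*} [AddCommGroup G] (g : G) (d : ℕ)
    (hd : 0 < d) (hg : addOrderOf g = d + 2) :
    (∀ a : Multiplicative (Multiset G), a ∈ ZeroSumMonoid ({g, -g} : Set G) →
      ∃! k : ℕ × ℕ × ℕ, k.2.2 < d + 2 ∧
        a = (Multiplicative.ofAdd (Multiset.replicate (d + 2) g)) ^ k.1 *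
            (Multiplicative.ofAdd (Multiset.replicate (d + 2) (-g))) ^ k.2.1 *
            (Multiplicative.ofAdd ({g, -g} : Multiset G)) ^ k.2.2) ∧
    (∀ (s : ℕ) (b : ↥(ZeroSumMonoid ({g, -g} : Set G))),
      (b : Multiplicative (Multiset G)) =
        (Multiplicative.ofAdd (Multiset.replicate (d + 2) g)) ^ s *
        (Multiplicative.ofAdd (Multiset.replicate (d + 2) (-g))) ^ s →
      LengthsOf b = {ℓ : ℕ | ∃ j ≤ s, ℓ = 2 * s + j * d}) := by
  classical
  have hne := zsm_ne hd hg
  constructor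
  · intro a ha
    obtain ⟨p, q, hmod, hrep⟩ := zsm_exists_rep hne hg ha
    have hpd : p / (d + 2) * (d + 2) + p % (d + 2) = p := by
      have := Nat.div_add_mod p (d + 2); linarith
    have hqd : q / (d + 2) * (d + 2) + p % (d + 2) = q := by
      have h1 := Nat.div_add_mod q (d + 2)
      have h2 : p % (d + 2) = q % (d + 2) := hmod
      linarith
    refine ⟨(p / (d + 2), q / (d + 2), p % (d + 2)),
      ⟨Nat.mod_lt _ (by omega), ?_⟩, ?_⟩
    · show a = _
      rw [zsm_v_eq, hrep, hpd, hqd]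
    · rintro ⟨k1, k2, k3⟩ ⟨hk3, heq⟩
      rw [zsm_v_eq] at heq
      obtain ⟨h1, h2⟩ := zsm_rep_inj hne (hrep.symm.trans heq)
      have e3 : p % (d + 2) = k3 := by
        rw [h1, Nat.add_comm, Nat.add_mul_mod_self_right]
        exact Nat.mod_eq_of_lt hk3
      have e1 : p / (d + 2) = k1 := by
        rw [h1, Nat.add_comm, mul_comm, Nat.add_mul_div_left _ _ (show 0 < d + 2 by omega),
          Nat.div_eq_of_lt hk3, Nat.zero_add]
      have e2 : q / (d + 2) = k2 := by
        rw [h2, Nat.add_comm, mul_comm, Nat.add_mul_div_left _ _ (show 0 < d + 2 by omega),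
          Nat.div_eq_of_lt hk3, Nat.zero_add]
      exact Prod.ext e1.symm (Prod.ext e2.symm e3.symm)
  · intro s b hb
    exact zsm_lengths hd hg s b hb
end

section
/- Every singleton {d} with d ∈ ℕ is realizable as the set of distances of a finitely generated Krull monoid; more strongly, the monoid can be taken to be a monoid of zero-sum sequences over a two-element subset of a finite cyclic group. -/
universe u

/-!
Write `n = d + 2`. A zero-sum sequence over `{g, -g}` is determined by the multiplicities
`(a, b)` of `g` and `-g`, and these range over the pairs with `a ≡ b [MOD n]`. The atoms are
`gⁿ`, `(-g)ⁿ` and `g (-g)`, and the only relation among them is `gⁿ (-g)ⁿ = (g (-g))ⁿ`, which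
changes the length by `n - 2 = d`. Hence any two lengths of an element differ by a multiple of
`d`, and an element with two different lengths `k < l` also has the length `k + d`; so the set of
distances is `{d}`. Divisibility in the monoid agrees with divisibility of multisets, so it is
Krull, and it is generated by its three atoms.
-/

open Multiplicative

lemma ne_neg_of_two_lt_addOrderOf {G : Type*} [AddCommGroup G] {g : G}
    (hg : 2 < addOrderOf g) : g ≠ -g := by
  intro h
  have : addOrderOf g ≤ 2 := addOrderOf_le_of_nsmul_eq_zero two_pos <| by
    rw [two_nsmul]; nth_rw 1 [h]; exact neg_add_cancel g
  omega

namespace ZeroSumMonoid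

variable {G : Type*} [AddCommGroup G] {G₀ : Set G}

lemma isUnit_iff_eq_one {x : ZeroSumMonoid G₀} : IsUnit x ↔ x = 1 :=
  ⟨fun hx => Subtype.ext <| by
    simpa using _root_.isUnit_iff_eq_one.1 (hx.map (ZeroSumMonoid G₀).subtype),
    fun hx => hx ▸ isUnit_one⟩

lemma dvd_iff_coe_dvd {x y : ZeroSumMonoid G₀} :
    x ∣ y ↔ (x : Multiplicative (Multiset G)) ∣ y := by
  refine ⟨fun h => map_dvd (ZeroSumMonoid G₀).subtype h, fun ⟨c, hc⟩ => ?_⟩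
  have hc' : toAdd (y : Multiplicative (Multiset G)) =
      toAdd (x : Multiplicative (Multiset G)) + toAdd c := congrArg toAdd hc
  have hc_mem : c ∈ ZeroSumMonoid G₀ := by
    refine ⟨fun z hz => y.2.1 z (hc' ▸ Multiset.mem_add.2 (Or.inr hz)), ?_⟩
    have := congrArg Multiset.sum hc'
    rwa [Multiset.sum_add, y.2.2, x.2.2, zero_add, eq_comm] at this
  exact ⟨⟨c, hc_mem⟩, Subtype.ext hc⟩

lemma isKrullMonoid : IsKrullMonoid (ZeroSumMonoid G₀) := by
  classical
  let e : Multiplicative (Multiset G) ≃* Multiplicative (G →₀ ℕ) :=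
    AddEquiv.toMultiplicative Multiset.toFinsupp
  exact ⟨G, (e : Multiplicative (Multiset G) →* _).comp (ZeroSumMonoid G₀).subtype,
    fun x y => dvd_iff_coe_dvd.trans (map_dvd_iff e).symm⟩

end ZeroSumMonoid

section Lengths

variable {M : Type*} [CommMonoid M]

lemma closure_setOf_irreducible_eq_top (h : ∀ a : M, (LengthsOf a).Nonempty) :
    Submonoid.closure {x : M | Irreducible x} = ⊤ := by
  refine eq_top_iff.2 fun a _ => ?_
  obtain ⟨_, s, -, hs, rfl⟩ := h a
  exact Submonoid.multiset_prod_mem _ s fun x hx => Submonoid.subset_closure (hs x hx)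

lemma deltaSet_eq_singleton {d : ℕ} (hd : 0 < d)
    (hmod : ∀ (a : M) (k l : ℕ), k ∈ LengthsOf a → l ∈ LengthsOf a → k ≡ l [MOD d])
    (hstep : ∀ (a : M) (k l : ℕ), k ∈ LengthsOf a → l ∈ LengthsOf a → k < l →
      k + d ∈ LengthsOf a)
    (hwit : ∃ (a : M) (k : ℕ), k ∈ LengthsOf a ∧ k + d ∈ LengthsOf a) :
    DeltaSet M = {d} := by
  ext e
  constructor
  · rintro ⟨he, a, k, hk, hke, hgap⟩
    have hde : d ∣ e := by
      simpa using (Nat.modEq_iff_dvd' (Nat.le_add_right k e)).1 (hmod a k _ hk hke)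
    have hle : e ≤ d := by
      have := hgap _ (hstep a k _ hk hke (by omega))
      omega
    exact le_antisymm hle (Nat.le_of_dvd he hde)
  · rintro rfl
    obtain ⟨a, k, hk, hkd⟩ := hwit
    refine ⟨hd, a, k, hk, hkd, fun l hl hkl => ?_⟩
    have hdvd := (Nat.modEq_iff_dvd' hkl.1.le).1 (hmod a k l hk hl)
    have := Nat.le_of_dvd (by omega) hdvd
    omega

end Lengths

section PairMonoid

variable {d : ℕ}

def pairAtoms (d : ℕ) : Set (ℕ × ℕ) := {(d + 2, 0), (0, d + 2), (1, 1)}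

/-- The lengths of `(a, b)` in the monoid `{(a, b) ∈ ℕ² | a ≡ b [MOD d + 2]}`: a factorization
into its atoms `pairAtoms d` uses `p`, `q` and `r` copies of `(d + 2, 0)`, `(0, d + 2)` and
`(1, 1)`. -/
def pairLengths (d a b : ℕ) : Set ℕ :=
  {k | ∃ p q r, k = p + q + r ∧ (d + 2) * p + r = a ∧ (d + 2) * q + r = b}

lemma eq_zero_or_eq_zero_of_add_mem_pairAtoms {u v : ℕ × ℕ}
    (hu : u.1 ≡ u.2 [MOD d + 2]) (hv : v.1 ≡ v.2 [MOD d + 2]) (h : u + v ∈ pairAtoms d) :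
    u = 0 ∨ v = 0 := by
  obtain ⟨u₁, u₂⟩ := u
  obtain ⟨v₁, v₂⟩ := v
  simp only [pairAtoms, Set.mem_insert_iff, Set.mem_singleton_iff, Prod.mk_add_mk,
    Prod.mk.injEq] at h hu hv
  simp only [Prod.mk_eq_zero]
  rcases h with ⟨h₁, h₂⟩ | ⟨h₁, h₂⟩ | ⟨h₁, h₂⟩
  · have : u₁ < d + 2 → u₁ = u₂ := fun hlt => hu.eq_of_lt_of_lt hlt (by omega)
    omega
  · have : u₂ < d + 2 → u₁ = u₂ := fun hlt => hu.eq_of_lt_of_lt (by omega) hlt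
    omega
  · have := hu.eq_of_lt_of_lt (by omega) (by omega)
    omega

lemma modEq_of_mem_pairAtoms {v : ℕ × ℕ} (hv : v ∈ pairAtoms d) :
    v.1 ≡ v.2 [MOD d + 2] := by
  rcases hv with rfl | rfl | rfl <;> simp [Nat.ModEq]

lemma exists_add_mem_pairAtoms {w : ℕ × ℕ} (h : w.1 ≡ w.2 [MOD d + 2]) (hw : w ≠ 0) :
    ∃ u v : ℕ × ℕ, u.1 ≡ u.2 [MOD d + 2] ∧ v ∈ pairAtoms d ∧ w = u + v := by
  obtain ⟨a, b⟩ := w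
  rcases Nat.eq_zero_or_pos a with rfl | ha
  · obtain ⟨c, rfl⟩ := Nat.modEq_zero_iff_dvd.1 h.symm
    obtain ⟨c, rfl⟩ := Nat.exists_eq_add_one_of_ne_zero (by rintro rfl; simp at hw : c ≠ 0)
    exact ⟨(0, (d + 2) * c), (0, d + 2), (Nat.modEq_zero_iff_dvd.2 (dvd_mul_right _ _)).symm,
      by simp [pairAtoms], by simp [mul_add]⟩
  rcases Nat.eq_zero_or_pos b with rfl | hb
  · obtain ⟨c, rfl⟩ := Nat.modEq_zero_iff_dvd.1 h
    obtain ⟨c, rfl⟩ := Nat.exists_eq_add_one_of_ne_zero (by rintro rfl; simp at ha : c ≠ 0)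
    exact ⟨((d + 2) * c, 0), (d + 2, 0), Nat.modEq_zero_iff_dvd.2 (dvd_mul_right _ _),
      by simp [pairAtoms], by simp [mul_add]⟩
  obtain ⟨a, rfl⟩ := Nat.exists_eq_add_one.2 ha
  obtain ⟨b, rfl⟩ := Nat.exists_eq_add_one.2 hb
  exact ⟨(a, b), (1, 1), Nat.ModEq.add_right_cancel' 1 h, by simp [pairAtoms], rfl⟩

lemma card_mem_pairLengths {t : Multiset (ℕ × ℕ)} (ht : ∀ v ∈ t, v ∈ pairAtoms d) :
    Multiset.card t ∈ pairLengths d t.sum.1 t.sum.2 := by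
  induction t using Multiset.induction_on with
  | empty => exact ⟨0, 0, 0, by simp⟩
  | cons v t ih =>
    obtain ⟨p, q, r, hk, ha, hb⟩ := ih fun w hw => ht w (Multiset.mem_cons_of_mem hw)
    simp only [Multiset.card_cons, Multiset.sum_cons, Prod.fst_add, Prod.snd_add]
    rcases ht v (Multiset.mem_cons_self v t) with rfl | rfl | rfl
    · exact ⟨p + 1, q, r, by omega, by simp [← ha]; ring, by simp [← hb]⟩
    · exact ⟨p, q + 1, r, by omega, by simp [← ha], by simp [← hb]; ring⟩
    · exact ⟨p, q, r + 1, by omega, by simp [← ha]; ring, by simp [← hb]; ring⟩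

lemma pairLengths_nonempty {a b : ℕ} (h : a ≡ b [MOD d + 2]) :
    (pairLengths d a b).Nonempty := by
  rcases le_total a b with hab | hab
  · obtain ⟨q, hq⟩ := (Nat.modEq_iff_dvd' hab).1 h
    exact ⟨_, 0, q, a, rfl, by simp, by omega⟩
  · obtain ⟨p, hp⟩ := (Nat.modEq_iff_dvd' hab).1 h.symm
    exact ⟨_, p, 0, b, rfl, by omega, by simp⟩

/-- Two factorizations of the same pair differ by `p - p'` times the relation
`(d + 2, 0) + (0, d + 2) = (d + 2) • (1, 1)`, which changes the length by `d`. -/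
lemma length_sub_eq_mul_of_eq {p q r p' q' r' : ℕ} (ha : (d + 2) * p + r = (d + 2) * p' + r')
    (hb : (d + 2) * q + r = (d + 2) * q' + r') :
    (q : ℤ) - q' = p - p' ∧
      ((p' + q' + r' : ℕ) : ℤ) - (p + q + r : ℕ) = d * ((p : ℤ) - p') := by
  have ha' : ((d : ℤ) + 2) * p + r = (d + 2) * p' + r' := by exact_mod_cast ha
  have hb' : ((d : ℤ) + 2) * q + r = (d + 2) * q' + r' := by exact_mod_cast hb
  have hqp : (q : ℤ) - q' = p - p' :=
    mul_left_cancel₀ (by positivity : (d : ℤ) + 2 ≠ 0) (by linear_combination hb' - ha')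
  refine ⟨hqp, ?_⟩
  push_cast
  linear_combination -ha' - hqp

lemma modEq_of_mem_pairLengths {a b k l : ℕ} (hk : k ∈ pairLengths d a b)
    (hl : l ∈ pairLengths d a b) : k ≡ l [MOD d] := by
  obtain ⟨p, q, r, rfl, rfl, rfl⟩ := hk
  obtain ⟨p', q', r', rfl, ha, hb⟩ := hl
  exact Nat.modEq_iff_dvd.2 ⟨_, (length_sub_eq_mul_of_eq ha.symm hb.symm).2⟩

lemma add_mem_pairLengths {a b k l : ℕ} (hk : k ∈ pairLengths d a b)
    (hl : l ∈ pairLengths d a b) (hkl : k < l) : k + d ∈ pairLengths d a b := by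
  obtain ⟨p, q, r, rfl, rfl, rfl⟩ := hk
  obtain ⟨p', q', r', rfl, ha, hb⟩ := hl
  obtain ⟨hqp, hlen⟩ := length_sub_eq_mul_of_eq ha.symm hb.symm
  have hpos : 0 < (p : ℤ) - p' :=
    pos_of_mul_pos_right (by push_cast at hlen ⊢; omega) (Int.natCast_nonneg d)
  refine ⟨p - 1, q - 1, r + (d + 2), by omega, ?_, ?_⟩
  · obtain ⟨p, rfl⟩ : ∃ p₀, p = p₀ + 1 := ⟨p - 1, by omega⟩
    simp only [Nat.add_sub_cancel]; ring
  · obtain ⟨q, rfl⟩ : ∃ q₀, q = q₀ + 1 := ⟨q - 1, by omega⟩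
    simp only [Nat.add_sub_cancel]; ring

end PairMonoid

namespace ZeroSumMonoid

variable {G : Type*} [AddCommGroup G] {g : G}

def pmSeq (g : G) (a b : ℕ) : Multiset G :=
  Multiset.replicate a g + Multiset.replicate b (-g)

lemma ofAdd_pmSeq_mem_iff {a b : ℕ} :
    ofAdd (pmSeq g a b) ∈ ZeroSumMonoid ({g, -g} : Set G) ↔ a ≡ b [MOD addOrderOf g] := by
  have hsupp : ∀ z ∈ pmSeq g a b, z ∈ ({g, -g} : Set G) := by
    intro z hz
    rcases Multiset.mem_add.1 hz with hz | hz <;> simp [Multiset.eq_of_mem_replicate hz]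
  have hsum : (pmSeq g a b).sum = a • g - b • g := by
    simp [pmSeq, Multiset.sum_replicate, sub_eq_add_neg]
  change (_ ∧ _) ↔ _
  rw [toAdd_ofAdd, hsum, sub_eq_zero, nsmul_eq_nsmul_iff_modEq]
  exact and_iff_right hsupp

variable [DecidableEq G]

def counts (x : ZeroSumMonoid ({g, -g} : Set G)) : ℕ × ℕ :=
  ((toAdd (x : Multiplicative (Multiset G))).count g,
    (toAdd (x : Multiplicative (Multiset G))).count (-g))

lemma counts_mul (x y : ZeroSumMonoid ({g, -g} : Set G)) :
    counts (x * y) = counts x + counts y := by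
  simp [counts, Multiset.count_add]

lemma counts_one : counts (1 : ZeroSumMonoid ({g, -g} : Set G)) = 0 := by
  simp [counts]

lemma counts_multiset_prod (s : Multiset (ZeroSumMonoid ({g, -g} : Set G))) :
    counts s.prod = (s.map counts).sum := by
  induction s using Multiset.induction_on with
  | empty => exact counts_one
  | cons x s ih => rw [Multiset.prod_cons, counts_mul, ih, Multiset.map_cons, Multiset.sum_cons]

lemma count_pmSeq (hg : g ≠ -g) (a b : ℕ) :
    (pmSeq g a b).count g = a ∧ (pmSeq g a b).count (-g) = b := by
  simp [pmSeq, Multiset.count_replicate, hg, hg.symm]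

lemma toAdd_eq_pmSeq (hg : g ≠ -g) (x : ZeroSumMonoid ({g, -g} : Set G)) :
    toAdd (x : Multiplicative (Multiset G)) = pmSeq g (counts x).1 (counts x).2 := by
  ext z
  obtain ⟨hga, hgb⟩ := count_pmSeq hg (counts x).1 (counts x).2
  by_cases hz : z = g ∨ z = -g
  · rcases hz with rfl | rfl
    · exact hga.symm
    · exact hgb.symm
  · have hzx : z ∉ toAdd (x : Multiplicative (Multiset G)) := fun h => hz (x.2.1 z h)
    have hzs : z ∉ pmSeq g (counts x).1 (counts x).2 := fun h => by
      rcases Multiset.mem_add.1 h with h | h <;> simp [Multiset.eq_of_mem_replicate h] at hz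
    rw [Multiset.count_eq_zero_of_notMem hzx, Multiset.count_eq_zero_of_notMem hzs]

lemma counts_injective (hg : g ≠ -g) :
    Function.Injective (counts : ZeroSumMonoid ({g, -g} : Set G) → ℕ × ℕ) := fun x y h =>
  Subtype.ext <| toAdd.injective <| by rw [toAdd_eq_pmSeq hg x, toAdd_eq_pmSeq hg y, h]

lemma counts_modEq (hg : g ≠ -g) (x : ZeroSumMonoid ({g, -g} : Set G)) :
    (counts x).1 ≡ (counts x).2 [MOD addOrderOf g] := by
  rw [← ofAdd_pmSeq_mem_iff, ← toAdd_eq_pmSeq hg, ofAdd_toAdd]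
  exact x.2

lemma exists_counts_eq (hg : g ≠ -g) {p : ℕ × ℕ} (hp : p.1 ≡ p.2 [MOD addOrderOf g]) :
    ∃ x : ZeroSumMonoid ({g, -g} : Set G), counts x = p := by
  refine ⟨⟨ofAdd (pmSeq g p.1 p.2), ofAdd_pmSeq_mem_iff.2 hp⟩, ?_⟩
  obtain ⟨h₁, h₂⟩ := count_pmSeq hg p.1 p.2
  exact Prod.ext h₁ h₂

variable {d : ℕ}

lemma irreducible_iff_counts_mem (hd : 0 < d) (hg : addOrderOf g = d + 2)
    {x : ZeroSumMonoid ({g, -g} : Set G)} : Irreducible x ↔ counts x ∈ pairAtoms d := by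
  have hneg : g ≠ -g := ne_neg_of_two_lt_addOrderOf (by omega)
  have hmod : ∀ y : ZeroSumMonoid ({g, -g} : Set G), (counts y).1 ≡ (counts y).2 [MOD d + 2] :=
    hg ▸ counts_modEq hneg
  have hunit : ∀ y : ZeroSumMonoid ({g, -g} : Set G), IsUnit y ↔ counts y = 0 := fun y => by
    rw [isUnit_iff_eq_one, ← counts_one (g := g), (counts_injective hneg).eq_iff]
  have hzero : (0 : ℕ × ℕ) ∉ pairAtoms d := by simp [pairAtoms, Prod.ext_iff]
  constructor
  · intro hx
    obtain ⟨u, v, hu, hv, huv⟩ :=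
      exists_add_mem_pairAtoms (hmod x) fun h => hx.not_isUnit ((hunit x).2 h)
    obtain ⟨y, rfl⟩ := exists_counts_eq hneg (hg ▸ hu)
    obtain ⟨z, rfl⟩ := exists_counts_eq hneg (hg ▸ modEq_of_mem_pairAtoms hv)
    rw [← counts_mul] at huv
    rcases hx.isUnit_or_isUnit (counts_injective hneg huv) with hy | hz
    · rwa [huv, counts_mul, (hunit y).1 hy, zero_add]
    · exact absurd ((hunit z).1 hz ▸ hv) hzero
  · intro hx
    refine ⟨fun hu => hzero ((hunit x).1 hu ▸ hx), fun y z hyz => ?_⟩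
    rw [hunit, hunit]
    exact eq_zero_or_eq_zero_of_add_mem_pairAtoms (hmod y) (hmod z) (counts_mul y z ▸ hyz ▸ hx)

lemma lengthsOf_eq_pairLengths (hd : 0 < d) (hg : addOrderOf g = d + 2)
    (x : ZeroSumMonoid ({g, -g} : Set G)) :
    LengthsOf x = pairLengths d (counts x).1 (counts x).2 := by
  have hneg : g ≠ -g := ne_neg_of_two_lt_addOrderOf (by omega)
  ext k
  constructor
  · rintro ⟨s, rfl, hs, rfl⟩
    have hatoms : ∀ v ∈ s.map counts, v ∈ pairAtoms d := fun v hv => by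
      obtain ⟨y, hy, rfl⟩ := Multiset.mem_map.1 hv
      exact (irreducible_iff_counts_mem hd hg).1 (hs y hy)
    simpa [counts_multiset_prod] using card_mem_pairLengths hatoms
  · rintro ⟨p, q, r, rfl, ha, hb⟩
    have hatom : ∀ {v : ℕ × ℕ}, v ∈ pairAtoms d →
        ∃ y : ZeroSumMonoid ({g, -g} : Set G), Irreducible y ∧ counts y = v := fun hv =>
      (exists_counts_eq hneg (hg ▸ modEq_of_mem_pairAtoms hv)).imp fun y hy =>
        ⟨(irreducible_iff_counts_mem hd hg).2 (by rwa [hy]), hy⟩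
    obtain ⟨u, hu, hcu⟩ := hatom (v := (d + 2, 0)) (by simp [pairAtoms])
    obtain ⟨v, hv, hcv⟩ := hatom (v := (0, d + 2)) (by simp [pairAtoms])
    obtain ⟨w, hw, hcw⟩ := hatom (v := (1, 1)) (by simp [pairAtoms])
    refine ⟨.replicate p u + .replicate q v + .replicate r w, by simp, ?_, ?_⟩
    · intro y hy
      simp only [Multiset.mem_add, Multiset.mem_replicate] at hy
      rcases hy with (⟨-, rfl⟩ | ⟨-, rfl⟩) | ⟨-, rfl⟩ <;> assumption
    · refine counts_injective hneg ?_
      rw [counts_multiset_prod]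
      simp [hcu, hcv, hcw, ← ha, ← hb, Prod.ext_iff, mul_comm]

lemma finite_setOf_irreducible (hd : 0 < d) (hg : addOrderOf g = d + 2) :
    {x : ZeroSumMonoid ({g, -g} : Set G) | Irreducible x}.Finite := by
  have hpre : {x : ZeroSumMonoid ({g, -g} : Set G) | Irreducible x} = counts ⁻¹' pairAtoms d :=
    Set.ext fun _ => irreducible_iff_counts_mem hd hg
  have hneg : g ≠ -g := ne_neg_of_two_lt_addOrderOf (by omega)
  rw [hpre]
  exact Set.Finite.preimage (counts_injective hneg).injOn (by simp [pairAtoms])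

lemma exists_finset_closure_eq_top (hd : 0 < d) (hg : addOrderOf g = d + 2) :
    ∃ S : Finset (ZeroSumMonoid ({g, -g} : Set G)),
      Submonoid.closure (S : Set (ZeroSumMonoid ({g, -g} : Set G))) = ⊤ := by
  have hneg : g ≠ -g := ne_neg_of_two_lt_addOrderOf (by omega)
  refine ⟨(finite_setOf_irreducible hd hg).toFinset, ?_⟩
  rw [Set.Finite.coe_toFinset]
  refine closure_setOf_irreducible_eq_top fun x => ?_
  rw [lengthsOf_eq_pairLengths hd hg]
  exact pairLengths_nonempty (hg ▸ counts_modEq hneg x)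

lemma deltaSet_eq (hd : 0 < d) (hg : addOrderOf g = d + 2) :
    DeltaSet (ZeroSumMonoid ({g, -g} : Set G)) = {d} := by
  have hneg : g ≠ -g := ne_neg_of_two_lt_addOrderOf (by omega)
  refine deltaSet_eq_singleton hd (fun x k l => ?_) (fun x k l => ?_) ?_ <;>
    simp only [lengthsOf_eq_pairLengths hd hg]
  · exact modEq_of_mem_pairLengths
  · exact add_mem_pairLengths
  · obtain ⟨x, hx⟩ := exists_counts_eq hneg (p := (d + 2, d + 2)) rfl
    refine ⟨x, 2, ?_, ?_⟩ <;> rw [hx]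
    · exact ⟨1, 1, 0, rfl, by ring, by ring⟩
    · exact ⟨0, 0, d + 2, by ring, by simp, by simp⟩

end ZeroSumMonoid

/-- Every singleton `{d}` is the set of distances of a finitely generated Krull monoid,
namely the monoid of zero-sum sequences over `{1, -1} ⊆ ℤ/(d+2)ℤ`. -/
theorem singleton_deltaSet_realizable (d : ℕ) (hd : 0 < d) :
    IsKrullMonoid ↥(ZeroSumMonoid ({1, -1} : Set (ZMod (d + 2)))) ∧
    (∃ S : Finset ↥(ZeroSumMonoid ({1, -1} : Set (ZMod (d + 2)))),
      Submonoid.closure (S : Set ↥(ZeroSumMonoid ({1, -1} : Set (ZMod (d + 2))))) = ⊤) ∧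
    DeltaSet ↥(ZeroSumMonoid ({1, -1} : Set (ZMod (d + 2)))) = {d} := by
  have hg : addOrderOf (1 : ZMod (d + 2)) = d + 2 := ZMod.addOrderOf_one _
  exact ⟨ZeroSumMonoid.isKrullMonoid, ZeroSumMonoid.exists_finset_closure_eq_top hd hg,
    ZeroSumMonoid.deltaSet_eq hd hg⟩
end
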